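/- Let k be an algebraically closed field with char k ≠ 2. Let d, d' ∈ k with d ≠ 1 and d' ≠ 1, and let ε, ε' ∈ {0,1}. Then there is a graded isomorphism S'(d,ε) ≅ S'(d',ε') if and only if ε = ε' and (d' = d, or d ≠ 0 and d' = d⁻¹). -/

import Mathlib

noncomputable section

/-- The free algebra on three generators `x, y, z` (indexed by `Fin 3`). -/
abbrev F3 (k : Type) [Field k] : Type := FreeAlgebra k (Fin 3)

noncomputable def X (k : Type) [Field k] : F3 k := FreeAlgebra.ι k 0
noncomputable def Y (k : Type) [Field k] : F3 k := FreeAlgebra.ι k 1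
noncomputable def Z (k : Type) [Field k] : F3 k := FreeAlgebra.ι k 2

/-- The quotient of the free algebra on `x, y, z` by the two-sided ideal
generated by the set `rels`. -/
abbrev quotAlg (k : Type) [Field k] (rels : Set (F3 k)) : Type :=
  RingQuot (fun a b : F3 k => a ∈ rels ∧ b = 0)

/-- The image of the `i`-th generator in the quotient algebra. -/
noncomputable def gen (k : Type) [Field k] (rels : Set (F3 k)) (i : Fin 3) :
    quotAlg k rels :=
  RingQuot.mkAlgHom k (fun a b : F3 k => a ∈ rels ∧ b = 0) (FreeAlgebra.ι k i)

/-- The `k`-linear span of the images of the generators in the quotient. -/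
noncomputable def genSpan (k : Type) [Field k] (rels : Set (F3 k)) :
    Submodule k (quotAlg k rels) :=
  Submodule.span k (Set.range (gen k rels))

/-- There is a graded isomorphism between the two quotient algebras:
a `k`-algebra isomorphism carrying the span of the generators onto the
span of the generators. -/
def GradedIso (k : Type) [Field k] (r1 r2 : Set (F3 k)) : Prop :=
  ∃ φ : quotAlg k r1 ≃ₐ[k] quotAlg k r2,
    Submodule.map φ.toLinearMap (genSpan k r1) = genSpan k r2

/-- Relations of `S'(d,ε) = k⟨x,y,z⟩/⟨xy − yx, zy − yz, zx − d·xz + ε·y²⟩`. -/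
noncomputable def S'rel (k : Type) [Field k] (d ε : k) : Set (F3 k) :=
  {X k * Y k - Y k * X k, Z k * Y k - Y k * Z k,
   Z k * X k - d • (X k * Z k) + ε • Y k ^ 2}

/-!
A graded isomorphism `φ` is recorded by the invertible matrix whose rows `a, b, c` express
`φ x, φ y, φ z` in the generators of the target, and it must carry each defining relation of
`S'(d,ε)` into the relation space of `S'(d',ε')`. With `V = k x ⊕ k y ⊕ k z`, that the degree-two
part of `S'(d,ε)` is `V ⊗ V` modulo exactly the span of its three relations is seen on the module
`k ⊕ V ⊕ (V ⊗ V)/R`, on which the generators act by raising the degree. Comparing coefficients,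
the two commutation relations force `φ y` to be a multiple of `y`, and the third relation
forces `φ` to swap or to fix the lines of `x` and `z`: this gives `d d' = 1` or `d' = d`, while
the coefficient of `y²` gives `ε = ε'`. Conversely `x ↦ z, y ↦ β y, z ↦ x` with `β² = -d` is
a graded isomorphism `S'(d,ε) ≅ S'(d⁻¹,ε)`.
-/

open Matrix

section QuadraticCombination

variable (k : Type*) {ι A : Type*} [Field k] [Fintype ι] [Ring A] [Algebra k A]

def quadCombination (g : ι → A) : Matrix ι ι k →ₗ[k] A where
  toFun c := ∑ i, ∑ j, c i j • (g i * g j)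
  map_add' c c' := by simp only [Matrix.add_apply, add_smul, Finset.sum_add_distrib]
  map_smul' a c := by simp only [Matrix.smul_apply, smul_eq_mul, mul_smul, Finset.smul_sum,
    RingHom.id_apply]

variable {k}

lemma quadCombination_apply (g : ι → A) (c : Matrix ι ι k) :
    quadCombination k g c = ∑ i, ∑ j, c i j • (g i * g j) := rfl

lemma linearCombination_mul_linearCombination (g : ι → A) (u v : ι → k) :
    Fintype.linearCombination k g u * Fintype.linearCombination k g v =
      quadCombination k g (vecMulVec u v) := by
  simp_rw [Fintype.linearCombination_apply, quadCombination_apply, vecMulVec_apply,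
    Finset.sum_mul, Finset.mul_sum, smul_mul_smul_comm]

lemma AlgHom.map_quadCombination {B : Type*} [Ring B] [Algebra k B] (f : A →ₐ[k] B) (g : ι → A)
    (c : Matrix ι ι k) : f (quadCombination k g c) = quadCombination k (f ∘ g) c := by
  simp [quadCombination_apply]

end QuadraticCombination

section TruncatedModule

variable {k ι : Type*} [Field k] [DecidableEq ι] (R : Submodule k (Matrix ι ι k))

/-- The action of the generators on the quadratic algebra with relation space `R`, truncated
above degree two. -/
def truncOp (i : ι) : Module.End k (k × (ι → k) × (Matrix ι ι k ⧸ R)) :=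
  (0 : _ →ₗ[k] k).prod ((LinearMap.single k (fun _ => k) i ∘ₗ LinearMap.fst k k _).prod
    (R.mkQ ∘ₗ (ofLinearEquiv k).toLinearMap ∘ₗ LinearMap.single k (fun _ => ι → k) i ∘ₗ
      LinearMap.fst k _ _ ∘ₗ LinearMap.snd k k _))

lemma truncOp_apply (i : ι) (v : k × (ι → k) × (Matrix ι ι k ⧸ R)) :
    truncOp R i v = (0, Pi.single i v.1, R.mkQ (of (Pi.single i v.2.1))) := rfl

variable [Fintype ι]

lemma quadCombination_truncOp_apply (c : Matrix ι ι k) (v : k × (ι → k) × (Matrix ι ι k ⧸ R)) :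
    quadCombination k (truncOp R) c v = (0, 0, R.mkQ (v.1 • c)) := by
  have hc : ∑ i, ∑ j, c i j • of (Pi.single i (Pi.single j v.1)) = v.1 • c := by
    ext p q
    simp [Matrix.sum_apply, Pi.single_apply, ite_apply, mul_comm]
  simp only [quadCombination_apply, Module.End.mul_apply, truncOp_apply, LinearMap.coe_sum,
    Finset.sum_apply, LinearMap.smul_apply, Pi.single_zero]
  ext
  · simp [Prod.fst_sum]
  · simp [Prod.fst_sum, Prod.snd_sum]
  · rw [← hc]
    simp [Prod.snd_sum, -Matrix.smul_of]

lemma quadCombination_truncOp_eq_zero {c : Matrix ι ι k} (hc : c ∈ R) :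
    quadCombination k (truncOp R) c = 0 := by
  ext v <;> simp [quadCombination_truncOp_apply, hc]

lemma linearIndependent_truncOp : LinearIndependent k (truncOp R) := by
  refine LinearIndependent.of_comp
    ((LinearMap.fst k _ _ ∘ₗ LinearMap.snd k _ _) ∘ₗ LinearMap.applyₗ (1, 0, 0)) ?_
  convert (Pi.basisFun k ι).linearIndependent
  ext i j
  simp [truncOp_apply]

end TruncatedModule

section QuotientAlgebra

variable {k : Type} [Field k] {A B : Type*} [Ring A] [Algebra k A] [Ring B] [Algebra k B]
  {rels r₁ r₂ : Set (F3 k)}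

def SatisfiesRels (rels : Set (F3 k)) (g : Fin 3 → A) : Prop :=
  ∀ r ∈ rels, FreeAlgebra.lift k g r = 0

lemma SatisfiesRels.map {g : Fin 3 → A} (hg : SatisfiesRels rels g) (f : A →ₐ[k] B) :
    SatisfiesRels rels (f ∘ g) := by
  intro r hr
  have hlift : FreeAlgebra.lift k (f ∘ g) = f.comp (FreeAlgebra.lift k g) := by ext; simp
  simp [hlift, hg r hr]

lemma satisfiesRels_gen : SatisfiesRels rels (gen k rels) := by
  intro r hr
  have hlift : FreeAlgebra.lift k (gen k rels) = RingQuot.mkAlgHom k _ := by ext; simp [gen]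
  simpa [hlift] using RingQuot.mkAlgHom_rel k (s := fun a b : F3 k => a ∈ rels ∧ b = 0) ⟨hr, rfl⟩

def quotLift (g : Fin 3 → A) (hg : SatisfiesRels rels g) : quotAlg k rels →ₐ[k] A :=
  RingQuot.liftAlgHom k ⟨FreeAlgebra.lift k g, fun a b ⟨ha, hb⟩ => by rw [hg a ha, hb, map_zero]⟩

@[simp]
lemma quotLift_gen (g : Fin 3 → A) (hg : SatisfiesRels rels g) (i : Fin 3) :
    quotLift g hg (gen k rels i) = g i := by
  simp [quotLift, gen]

lemma quotAlg_algHom_ext {f f' : quotAlg k rels →ₐ[k] A}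
    (h : ∀ i, f (gen k rels i) = f' (gen k rels i)) : f = f' :=
  RingQuot.ringQuot_ext' k f f' (FreeAlgebra.hom_ext (funext h))

lemma gen_mem_genSpan (i : Fin 3) : gen k rels i ∈ genSpan k rels :=
  Submodule.subset_span ⟨i, rfl⟩

lemma gradedIso_of_forall_mem_genSpan (φ : quotAlg k r₁ ≃ₐ[k] quotAlg k r₂)
    (h : ∀ i, φ (gen k r₁ i) ∈ genSpan k r₂) (h' : ∀ i, φ.symm (gen k r₂ i) ∈ genSpan k r₁) :
    GradedIso k r₁ r₂ := by
  refine ⟨φ, le_antisymm ?_ ?_⟩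
  · rw [genSpan, Submodule.map_span_le]
    rintro _ ⟨i, rfl⟩
    exact h i
  · rw [genSpan, Submodule.span_le]
    rintro _ ⟨i, rfl⟩
    exact ⟨φ.symm (gen k r₂ i), h' i, φ.apply_symm_apply _⟩

lemma gradedIso_refl (rels : Set (F3 k)) : GradedIso k rels rels :=
  gradedIso_of_forall_mem_genSpan AlgEquiv.refl gen_mem_genSpan gen_mem_genSpan

end QuotientAlgebra

section S'Relations

variable {k : Type} [Field k] {A : Type*} [Ring A] [Algebra k A]

/-- The span of the three defining relations of `S'(d,ε)`, as coefficient matrices of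
`∑ c i j • x_i x_j`, described by the six linear equations cutting it out. -/
def relSpace (d ε : k) : Submodule k (Matrix (Fin 3) (Fin 3) k) where
  carrier := {c | c 0 0 = 0 ∧ c 0 1 + c 1 0 = 0 ∧ c 0 2 + d * c 2 0 = 0 ∧
    c 1 1 = ε * c 2 0 ∧ c 1 2 + c 2 1 = 0 ∧ c 2 2 = 0}
  add_mem' {c c'} h h' := by
    obtain ⟨h₁, h₂, h₃, h₄, h₅, h₆⟩ := h
    obtain ⟨h₁', h₂', h₃', h₄', h₅', h₆'⟩ := h'
    simp only [Set.mem_ofPred_eq, Matrix.add_apply]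
    exact ⟨by linear_combination h₁ + h₁', by linear_combination h₂ + h₂',
      by linear_combination h₃ + h₃', by linear_combination h₄ + h₄',
      by linear_combination h₅ + h₅', by linear_combination h₆ + h₆'⟩
  zero_mem' := by simp
  smul_mem' a c h := by
    obtain ⟨h₁, h₂, h₃, h₄, h₅, h₆⟩ := h
    simp only [Set.mem_ofPred_eq, Matrix.smul_apply, smul_eq_mul]
    exact ⟨by linear_combination a * h₁, by linear_combination a * h₂,
      by linear_combination a * h₃, by linear_combination a * h₄,
      by linear_combination a * h₅, by linear_combination a * h₆⟩

lemma mem_relSpace {d ε : k} {c : Matrix (Fin 3) (Fin 3) k} :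
    c ∈ relSpace d ε ↔ c 0 0 = 0 ∧ c 0 1 + c 1 0 = 0 ∧ c 0 2 + d * c 2 0 = 0 ∧
      c 1 1 = ε * c 2 0 ∧ c 1 2 + c 2 1 = 0 ∧ c 2 2 = 0 :=
  Iff.rfl

lemma satisfiesRels_S'rel_iff (d ε : k) (g : Fin 3 → A) :
    SatisfiesRels (S'rel k d ε) g ↔ g 0 * g 1 - g 1 * g 0 = 0 ∧ g 2 * g 1 - g 1 * g 2 = 0 ∧
      g 2 * g 0 - d • (g 0 * g 2) + ε • g 1 ^ 2 = 0 := by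
  simp [SatisfiesRels, S'rel, X, Y, Z]

lemma satisfiesRels_S'rel_linearCombination_iff (d ε : k) (g : Fin 3 → A) (a b c : Fin 3 → k) :
    SatisfiesRels (S'rel k d ε) (Fintype.linearCombination k g ∘ ![a, b, c]) ↔
      quadCombination k g (vecMulVec a b - vecMulVec b a) = 0 ∧
      quadCombination k g (vecMulVec c b - vecMulVec b c) = 0 ∧
      quadCombination k g (vecMulVec c a - d • vecMulVec a c + ε • vecMulVec b b) = 0 := by
  simp [satisfiesRels_S'rel_iff, pow_two, linearCombination_mul_linearCombination]

lemma satisfiesRels_truncOp (d ε : k) : SatisfiesRels (S'rel k d ε) (truncOp (relSpace d ε)) := by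
  have hT : truncOp (relSpace d ε) = Fintype.linearCombination k (truncOp (relSpace d ε)) ∘
      ![Pi.single 0 1, Pi.single 1 1, Pi.single 2 1] := by
    ext1 i; fin_cases i <;> simp
  rw [hT, satisfiesRels_S'rel_linearCombination_iff]
  refine ⟨?_, ?_, ?_⟩ <;> apply quadCombination_truncOp_eq_zero <;>
    simp [mem_relSpace, vecMulVec_apply]

lemma quotLift_truncOp_comp_gen (d ε : k) :
    quotLift _ (satisfiesRels_truncOp d ε) ∘ gen k (S'rel k d ε) = truncOp (relSpace d ε) := by
  ext1 i
  simp

lemma linearIndependent_gen_S' (d ε : k) : LinearIndependent k (gen k (S'rel k d ε)) := by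
  refine LinearIndependent.of_comp (quotLift _ (satisfiesRels_truncOp d ε)).toLinearMap ?_
  rw [AlgHom.coe_toLinearMap, quotLift_truncOp_comp_gen]
  exact linearIndependent_truncOp _

lemma mem_relSpace_of_quadCombination_gen_eq_zero {d ε : k} {c : Matrix (Fin 3) (Fin 3) k}
    (h : quadCombination k (gen k (S'rel k d ε)) c = 0) : c ∈ relSpace d ε := by
  have h' := congrArg (fun f => (f (1, 0, 0)).2.2)
    (congrArg (quotLift _ (satisfiesRels_truncOp d ε)) h)
  simpa [AlgHom.map_quadCombination, quotLift_truncOp_comp_gen, quadCombination_truncOp_apply]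
    using h'

end S'Relations

section ScalarAnalysis

variable {k : Type} [Field k]

lemma eq_of_mul_eq_mul_of_mem_zero_one {ε ε' s t : k} (hε : ε ∈ ({0, 1} : Set k))
    (hε' : ε' ∈ ({0, 1} : Set k)) (hs : s ≠ 0) (ht : t ≠ 0) (h : ε * s = ε' * t) : ε = ε' := by
  rcases hε with rfl | rfl <;> rcases hε' with rfl | rfl <;> simp_all [eq_comm]

lemma eq_zero_and_eq_zero_of_comm_mem_relSpace {d' ε' : k} (hd' : d' ≠ 1) {a b c : Fin 3 → k}
    (hdet : (of ![a, b, c]).det ≠ 0)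
    (hab : vecMulVec a b - vecMulVec b a ∈ relSpace d' ε')
    (hcb : vecMulVec c b - vecMulVec b c ∈ relSpace d' ε') : b 0 = 0 ∧ b 2 = 0 := by
  have h1d' : 1 - d' ≠ 0 := sub_ne_zero.mpr hd'.symm
  have hA : a 0 * b 2 - a 2 * b 0 = 0 := by
    have h := (mem_relSpace.1 hab).2.2.1
    simp only [Matrix.sub_apply, vecMulVec_apply] at h
    exact (mul_eq_zero.1 (by linear_combination h : (1 - d') * _ = 0)).resolve_left h1d'
  have hC : c 0 * b 2 - c 2 * b 0 = 0 := by
    have h := (mem_relSpace.1 hcb).2.2.1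
    simp only [Matrix.sub_apply, vecMulVec_apply] at h
    exact (mul_eq_zero.1 (by linear_combination h : (1 - d') * _ = 0)).resolve_left h1d'
  rw [det_fin_three] at hdet
  simp only [of_apply, cons_val', cons_val_zero, cons_val_one, cons_val_two, empty_val',
    cons_val_fin_one, tail_cons, head_fin_const] at hdet
  -- `det * b 0` and `det * b 2` lie in the ideal generated by the minors `hA` and `hC`.
  constructor
  · refine (mul_eq_zero.1 ?_).resolve_left hdet
    linear_combination (b 1 * c 0 - b 0 * c 1) * hA + (a 1 * b 0 - a 0 * b 1) * hC
  · refine (mul_eq_zero.1 ?_).resolve_left hdet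
    linear_combination (b 1 * c 2 - b 2 * c 1) * hA + (a 1 * b 2 - a 2 * b 1) * hC

lemma params_eq_of_twist_mem_relSpace {d d' ε ε' : k} (hd : d ≠ 1) (hε : ε ∈ ({0, 1} : Set k))
    (hε' : ε' ∈ ({0, 1} : Set k)) {a b c : Fin 3 → k} (hb0 : b 0 = 0) (hb2 : b 2 = 0)
    (hb1 : b 1 ≠ 0) (hac : a 0 * c 2 - a 2 * c 0 ≠ 0)
    (h : vecMulVec c a - d • vecMulVec a c + ε • vecMulVec b b ∈ relSpace d' ε') :
    ε = ε' ∧ (d' = d ∨ (d ≠ 0 ∧ d' = d⁻¹)) := by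
  obtain ⟨h00, h01, h02, h11, -, h22⟩ := mem_relSpace.1 h
  simp only [Matrix.add_apply, Matrix.sub_apply, Matrix.smul_apply, vecMulVec_apply, hb0, hb2,
    smul_eq_mul] at h00 h01 h02 h11 h22
  have h1d : 1 - d ≠ 0 := sub_ne_zero.mpr hd.symm
  have e00 : a 0 * c 0 = 0 :=
    (mul_eq_zero.1 (by linear_combination h00 : (1 - d) * _ = 0)).resolve_left h1d
  have e22 : a 2 * c 2 = 0 :=
    (mul_eq_zero.1 (by linear_combination h22 : (1 - d) * _ = 0)).resolve_left h1d
  have e01 : a 0 * c 1 + a 1 * c 0 = 0 :=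
    (mul_eq_zero.1 (by linear_combination h01 : (1 - d) * _ = 0)).resolve_left h1d
  have e11 : a 1 * c 1 = 0 := by
    rcases mul_eq_zero.1 e00 with ha0 | hc0
    · have hc0 : c 0 ≠ 0 := fun hc0 ↦ hac (by rw [ha0, hc0]; ring)
      have ha1 : a 1 = 0 := (mul_eq_zero.1 (by linear_combination e01 - c 1 * ha0 :
        a 1 * c 0 = 0)).resolve_right hc0
      rw [ha1, zero_mul]
    · have ha0 : a 0 ≠ 0 := fun ha0 ↦ hac (by rw [ha0, hc0]; ring)
      have hc1 : c 1 = 0 := (mul_eq_zero.1 (by linear_combination e01 - a 1 * hc0 :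
        a 0 * c 1 = 0)).resolve_left ha0
      rw [hc1, mul_zero]
  have e02 : (1 - d * d') * (a 2 * c 0) + (d' - d) * (a 0 * c 2) = 0 := by
    linear_combination h02
  have hy : ε * b 1 ^ 2 = ε' * (a 0 * c 2 - d * (a 2 * c 0)) := by
    linear_combination h11 - (1 - d) * e11
  -- In the `x`- and `z`-coordinates, `a, c` are multiples of `e₀, e₂` (`a 2 * c 0 = 0`)
  -- or of `e₂, e₀`.
  by_cases hq : a 2 * c 0 = 0
  · have hp : a 0 * c 2 ≠ 0 := fun hp ↦ hac (by rw [hp, hq]; ring)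
    have hdd : d' = d := sub_eq_zero.1 <| (mul_eq_zero.1 (by
      linear_combination e02 - (1 - d * d') * hq : (d' - d) * (a 0 * c 2) = 0)).resolve_right hp
    refine ⟨eq_of_mul_eq_mul_of_mem_zero_one hε hε' (pow_ne_zero 2 hb1) hp ?_, Or.inl hdd⟩
    rw [hy, hq]; ring
  · have hp : a 0 * c 2 = 0 := by
      refine (mul_eq_zero.1 ?_).resolve_right hq
      linear_combination (a 0 * c 0) * e22
    have hdd : d * d' = 1 := (sub_eq_zero.1 <| (mul_eq_zero.1 (by
      linear_combination e02 - (d' - d) * hp : (1 - d * d') * (a 2 * c 0) = 0)).resolve_right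
        hq).symm
    have hd0 : d ≠ 0 := left_ne_zero_of_mul_eq_one hdd
    refine ⟨eq_of_mul_eq_mul_of_mem_zero_one (t := -d * (a 2 * c 0)) hε hε' (pow_ne_zero 2 hb1)
      (mul_ne_zero (neg_ne_zero.2 hd0) hq) ?_, Or.inr ⟨hd0, eq_inv_of_mul_eq_one_right hdd⟩⟩
    rw [hy, hp]; ring

theorem params_eq_of_mem_relSpace {d d' ε ε' : k} (hd : d ≠ 1) (hd' : d' ≠ 1)
    (hε : ε ∈ ({0, 1} : Set k)) (hε' : ε' ∈ ({0, 1} : Set k)) {a b c : Fin 3 → k}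
    (hdet : (of ![a, b, c]).det ≠ 0)
    (hab : vecMulVec a b - vecMulVec b a ∈ relSpace d' ε')
    (hcb : vecMulVec c b - vecMulVec b c ∈ relSpace d' ε')
    (hcab : vecMulVec c a - d • vecMulVec a c + ε • vecMulVec b b ∈ relSpace d' ε') :
    ε = ε' ∧ (d' = d ∨ (d ≠ 0 ∧ d' = d⁻¹)) := by
  obtain ⟨hb0, hb2⟩ := eq_zero_and_eq_zero_of_comm_mem_relSpace hd' hdet hab hcb
  have hdet' : (of ![a, b, c]).det = b 1 * (a 0 * c 2 - a 2 * c 0) := by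
    rw [det_fin_three]
    simp [hb0, hb2]
    ring
  rw [hdet', mul_ne_zero_iff] at hdet
  exact params_eq_of_twist_mem_relSpace hd hε hε' hb0 hb2 hdet.1 hdet.2 hcab

end ScalarAnalysis

section S'Isomorphisms

variable {k : Type} [Field k]

theorem params_eq_of_gradedIso {d d' ε ε' : k} (hd : d ≠ 1) (hd' : d' ≠ 1)
    (hε : ε ∈ ({0, 1} : Set k)) (hε' : ε' ∈ ({0, 1} : Set k))
    (h : GradedIso k (S'rel k d ε) (S'rel k d' ε')) :
    ε = ε' ∧ (d' = d ∨ (d ≠ 0 ∧ d' = d⁻¹)) := by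
  obtain ⟨φ, hφ⟩ := h
  have hrow (i : Fin 3) : ∃ u, Fintype.linearCombination k (gen k (S'rel k d' ε')) u =
      φ (gen k (S'rel k d ε) i) := by
    have hi : φ (gen k _ i) ∈ genSpan k (S'rel k d' ε') :=
      hφ ▸ Submodule.mem_map_of_mem (gen_mem_genSpan i)
    exact (Submodule.mem_span_range_iff_exists_fun k).1 hi
  obtain ⟨a, ha⟩ := hrow 0
  obtain ⟨b, hb⟩ := hrow 1
  obtain ⟨c, hc⟩ := hrow 2
  have hφgen : φ.toAlgHom ∘ gen k (S'rel k d ε) =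
      Fintype.linearCombination k (gen k (S'rel k d' ε')) ∘ ![a, b, c] := by
    ext1 i; fin_cases i <;> simp [ha, hb, hc]
  have hsat := satisfiesRels_gen.map φ.toAlgHom
  rw [hφgen, satisfiesRels_S'rel_linearCombination_iff] at hsat
  obtain ⟨hab, hcb, hcab⟩ := hsat
  have hli : LinearIndependent k ![a, b, c] := by
    refine LinearIndependent.of_comp (Fintype.linearCombination k (gen k (S'rel k d' ε'))) ?_
    rw [← hφgen]
    exact (linearIndependent_gen_S' d ε).map' φ.toLinearMap (LinearEquiv.ker φ.toLinearEquiv)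
  have hdet : (of ![a, b, c]).det ≠ 0 :=
    ((isUnit_iff_isUnit_det _).1 (linearIndependent_rows_iff_isUnit.1 hli)).ne_zero
  exact params_eq_of_mem_relSpace hd hd' hε hε' hdet
    (mem_relSpace_of_quadCombination_gen_eq_zero hab)
    (mem_relSpace_of_quadCombination_gen_eq_zero hcb)
    (mem_relSpace_of_quadCombination_gen_eq_zero hcab)

lemma satisfiesRels_S'rel_swap {A : Type*} [Ring A] [Algebra k A] {d ε β : k} (hd : d ≠ 0)
    (hβ : β ^ 2 = -d⁻¹) {g : Fin 3 → A} (hg : SatisfiesRels (S'rel k d ε) g) :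
    SatisfiesRels (S'rel k d⁻¹ ε) ![g 2, β • g 1, g 0] := by
  rw [satisfiesRels_S'rel_iff] at hg ⊢
  obtain ⟨h₁, h₂, h₃⟩ := hg
  simp only [cons_val_zero, cons_val_one, cons_val_two, head_cons, tail_cons, mul_smul_comm,
    smul_mul_assoc, smul_pow, hβ]
  refine ⟨?_, ?_, ?_⟩
  · rw [← smul_sub, h₂, smul_zero]
  · linear_combination (norm := module) β • h₁
  · linear_combination (norm := match_scalars) (-d⁻¹) • h₃ <;> field_simp <;> ring

theorem gradedIso_S'rel_inv {d ε β : k} (hd : d ≠ 0) (hβ : β ^ 2 = -d) :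
    GradedIso k (S'rel k d ε) (S'rel k d⁻¹ ε) := by
  have hβ0 : β ≠ 0 := by
    rintro rfl
    exact hd (by simpa [eq_comm] using hβ)
  have hfwd := satisfiesRels_S'rel_swap (inv_ne_zero hd) (by rw [inv_inv, hβ])
    (satisfiesRels_gen (rels := S'rel k d⁻¹ ε))
  rw [inv_inv] at hfwd
  have hbwd := satisfiesRels_S'rel_swap (β := β⁻¹) hd (by rw [inv_pow, hβ, inv_neg])
    (satisfiesRels_gen (rels := S'rel k d ε))
  let Φ := quotLift _ hfwd
  let Ψ := quotLift _ hbwd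
  have hΦΨ : Φ.comp Ψ = AlgHom.id k _ :=
    quotAlg_algHom_ext fun i ↦ by fin_cases i <;> simp [Φ, Ψ, smul_smul, hβ0]
  have hΨΦ : Ψ.comp Φ = AlgHom.id k _ :=
    quotAlg_algHom_ext fun i ↦ by fin_cases i <;> simp [Φ, Ψ, smul_smul, hβ0]
  refine gradedIso_of_forall_mem_genSpan (AlgEquiv.ofAlgHom Φ Ψ hΦΨ hΨΦ) ?_ ?_ <;>
    intro i <;> fin_cases i <;> simp [Φ, Ψ, gen_mem_genSpan, Submodule.smul_mem]

end S'Isomorphisms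

theorem stmt8_general (k : Type) [Field k] [IsAlgClosed k]
    (d d' ε ε' : k) (hd : d ≠ 1) (hd' : d' ≠ 1)
    (hε : ε ∈ ({0, 1} : Set k)) (hε' : ε' ∈ ({0, 1} : Set k)) :
    GradedIso k (S'rel k d ε) (S'rel k d' ε') ↔
      ε = ε' ∧ (d' = d ∨ (d ≠ 0 ∧ d' = d⁻¹)) := by
  refine ⟨params_eq_of_gradedIso hd hd' hε hε', ?_⟩
  rintro ⟨rfl, rfl | ⟨hd0, rfl⟩⟩
  · exact gradedIso_refl _
  · obtain ⟨β, hβ⟩ := IsAlgClosed.exists_pow_nat_eq (-d) two_pos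
    exact gradedIso_S'rel_inv hd0 hβ

theorem stmt8 (k : Type) [Field k] [IsAlgClosed k] (hchar : ringChar k ≠ 2)
    (d d' ε ε' : k) (hd : d ≠ 1) (hd' : d' ≠ 1)
    (hε : ε ∈ ({0, 1} : Set k)) (hε' : ε' ∈ ({0, 1} : Set k)) :
    GradedIso k (S'rel k d ε) (S'rel k d' ε') ↔
      ε = ε' ∧ (d' = d ∨ (d ≠ 0 ∧ d' = d⁻¹)) :=
  stmt8_general k d d' ε ε' hd hd' hε hε'
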